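/- arXiv:2305.12679 — 2 statements merged into one kernel-verified Lean document; each statement's English description precedes it below -/
import Mathlib

section
/- From advantage to optimality: suppose μ_c is a probability measure on S such that μ_{π̃} is absolutely continuous with respect to μ_c for every non-stationary optimal policy π̃ (i.e., every non-stationary policy with J_{π̃} = J*). If a stationary policy π̂ satisfies ⟨μ_c, Q*(·, π̂) − Q*(·, π*_e)⟩ = 0, then π̂ is optimal: J_{π̂} = J*. -/
/-!
Since `V* = sup_a Q*(·, a) = Q*(·, π*_e)`, the advantage `Q*(s, π̂) - Q*(s, π*_e)` is
nonpositive, so its vanishing `μ_c`-mean forces it to vanish `μ_c`-a.e. Let `π_k` follow `π̂` for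
the first `k` steps and `π*_e` afterwards. If `π_k` is optimal, its step-`k` state law is
dominated by its occupancy measure, hence by `μ_c`; so `π_k` and `π_{k+1}`, which differ only in
the action drawn at step `k`, have the same return, and by induction every `π_k` is optimal.
Bounded discounted rewards make `J_{π_k} → J_{π̂}`.
-/

open MeasureTheory ProbabilityTheory Filter Set

noncomputable section

variable {S A : Type*} [MeasurableSpace S] [MeasurableSpace A]

/-- One transition step of the MDP at the level of state-action laws:
from `(s,a) ~ ρ`, draw `s' ~ P(·|s,a)` and `a' ~ κ(·|s')`. -/
def mdpStep (P : Kernel (S × A) S) (κ : Kernel S A) (ρ : Measure (S × A)) :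
    Measure (S × A) :=
  ρ.bind fun sa => (P sa).bind fun s' => (κ s').map fun a' => (s', a')

/-- Initial state-action law: `s ~ μ`, `a ~ κ(·|s)`. -/
def mdpInit (κ : Kernel S A) (μ : Measure S) : Measure (S × A) :=
  μ.bind fun s => (κ s).map fun a => (s, a)

/-- Law of `(s_i, a_i)` for the (possibly non-stationary) policy `π` started at `μ0`. -/
def saLaw (P : Kernel (S × A) S) (π : ℕ → Kernel S A) (μ0 : Measure S) :
    ℕ → Measure (S × A)
  | 0 => mdpInit (π 0) μ0
  | i + 1 => mdpStep P (π (i + 1)) (saLaw P π μ0 i)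

/-- Expected discounted return `J_π`. -/
def retJ (P : Kernel (S × A) S) (π : ℕ → Kernel S A) (μ0 : Measure S) (γ : ℝ)
    (R : S × A → ℝ) : ℝ :=
  ∑' i : ℕ, γ ^ i * ∫ sa, R sa ∂(saLaw P π μ0 i)

/-- Law of `(s_i, a_i)` started from a state-action measure `ρ` at step 0. -/
def saLawFrom (P : Kernel (S × A) S) (π : ℕ → Kernel S A) (ρ : Measure (S × A)) :
    ℕ → Measure (S × A)
  | 0 => ρ
  | i + 1 => mdpStep P (π (i + 1)) (saLawFrom P π ρ i)

/-- State-action value function `Q_π(s, a)`. -/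
def Qval (P : Kernel (S × A) S) (π : ℕ → Kernel S A) (γ : ℝ) (R : S × A → ℝ)
    (sa : S × A) : ℝ :=
  ∑' i : ℕ, γ ^ i * ∫ x, R x ∂(saLawFrom P π (Measure.dirac sa) i)

/-- State value function `V_π(s)`. -/
def Vval (P : Kernel (S × A) S) (π : ℕ → Kernel S A) (γ : ℝ) (R : S × A → ℝ)
    (s : S) : ℝ :=
  retJ P π (Measure.dirac s) γ R

/-- Discounted state occupancy measure `μ_π = (1-γ) ∑ γ^i μ_{π,i}`. -/
def stateOcc (P : Kernel (S × A) S) (π : ℕ → Kernel S A) (μ0 : Measure S) (γ : ℝ) :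
    Measure S :=
  ENNReal.ofReal (1 - γ) •
    Measure.sum fun i => ENNReal.ofReal (γ ^ i) • (saLaw P π μ0 i).map Prod.fst

section Discounted

variable {γ C : ℝ} {c : ℕ → ℝ}

lemma summable_pow_mul_of_mem_Icc (hγ : γ ∈ Ico 0 1) (hc : ∀ i, c i ∈ Icc 0 C) :
    Summable fun i => γ ^ i * c i :=
  Summable.of_nonneg_of_le (fun i => mul_nonneg (pow_nonneg hγ.1 i) (hc i).1)
    (fun i => mul_le_mul_of_nonneg_left (hc i).2 (pow_nonneg hγ.1 i))
    ((summable_geometric_of_lt_one hγ.1 hγ.2).mul_right C)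

lemma tsum_pow_mul_mem_Icc (hγ : γ ∈ Ico 0 1) (hc : ∀ i, c i ∈ Icc 0 C) :
    ∑' i, γ ^ i * c i ∈ Icc 0 (C * (1 - γ)⁻¹) := by
  refine ⟨tsum_nonneg fun i => mul_nonneg (pow_nonneg hγ.1 i) (hc i).1, ?_⟩
  rw [← tsum_geometric_of_lt_one hγ.1 hγ.2, ← tsum_mul_left]
  refine (summable_pow_mul_of_mem_Icc hγ hc).tsum_le_tsum (fun i => ?_)
    ((summable_geometric_of_lt_one hγ.1 hγ.2).mul_left C)
  rw [mul_comm C]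
  exact mul_le_mul_of_nonneg_left (hc i).2 (pow_nonneg hγ.1 i)

end Discounted

section Integral

variable {X Y : Type*} [MeasurableSpace X] [MeasurableSpace Y] {C : ℝ}

lemma integral_mem_Icc_of_mem_Icc (μ : Measure X) [IsProbabilityMeasure μ] {f : X → ℝ}
    (hf : ∀ x, f x ∈ Icc 0 C) : ∫ x, f x ∂μ ∈ Icc 0 C := by
  refine ⟨integral_nonneg fun x => (hf x).1, ?_⟩
  have h := norm_integral_le_of_norm_le_const (μ := μ) (C := C) (ae_of_all _ fun x => by
    rw [Real.norm_of_nonneg (hf x).1]; exact (hf x).2)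
  simpa [Real.norm_of_nonneg (integral_nonneg fun x => (hf x).1)] using h

lemma integrable_of_mem_Icc (μ : Measure X) [IsFiniteMeasure μ] {f : X → ℝ}
    (hf_meas : Measurable f) (hf : ∀ x, f x ∈ Icc 0 C) : Integrable f μ :=
  Integrable.of_bound hf_meas.aestronglyMeasurable C (ae_of_all _ fun x => by
    rw [Real.norm_of_nonneg (hf x).1]; exact (hf x).2)

lemma integral_comp_eq_integral_integral (μ : Measure X) (κ : Kernel X Y) {f : Y → ℝ}
    (hf : Integrable f (κ ∘ₘ μ)) : ∫ y, f y ∂(κ ∘ₘ μ) = ∫ x, ∫ y, f y ∂(κ x) ∂μ := by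
  rw [Measure.comp_eq_comp_const_apply] at hf ⊢
  rw [Kernel.integral_comp hf, Kernel.const_apply]

lemma integral_le_ciSup {μ : Measure X} [IsProbabilityMeasure μ] {f : X → ℝ}
    (hf : Integrable f μ) (hbdd : BddAbove (range f)) : ∫ x, f x ∂μ ≤ ⨆ x, f x := by
  simpa using integral_mono hf (integrable_const _) (le_ciSup hbdd)

end Integral

section Advantage

variable {X Y : Type*} [MeasurableSpace X] [MeasurableSpace Y] {C : ℝ} {Q : X × Y → ℝ}
  {κ κ' : Kernel X Y} [IsMarkovKernel κ] [IsMarkovKernel κ']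

lemma ae_eq_of_integral_advantage_eq_zero (hQ_meas : Measurable Q) (hQ : ∀ xy, Q xy ∈ Icc 0 C)
    (hκ' : ∀ x, ∫ y, Q (x, y) ∂(κ' x) = ⨆ y, Q (x, y)) (μ : Measure X) [IsFiniteMeasure μ]
    (h : ∫ x, (∫ y, Q (x, y) ∂(κ x) - ∫ y, Q (x, y) ∂(κ' x)) ∂μ = 0) :
    (fun x => ∫ y, Q (x, y) ∂(κ x)) =ᵐ[μ] fun x => ∫ y, Q (x, y) ∂(κ' x) := by
  have hint (η : Kernel X Y) [IsMarkovKernel η] : Integrable (fun x => ∫ y, Q (x, y) ∂(η x)) μ :=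
    integrable_of_mem_Icc μ hQ_meas.stronglyMeasurable.integral_kernel_prod_right'.measurable
      fun x => integral_mem_Icc_of_mem_Icc _ fun y => hQ (x, y)
  have hle (x : X) : ∫ y, Q (x, y) ∂(κ x) ≤ ∫ y, Q (x, y) ∂(κ' x) := by
    rw [hκ']
    exact integral_le_ciSup (integrable_of_mem_Icc _ (hQ_meas.comp measurable_prodMk_left)
      fun y => hQ (x, y)) ⟨C, forall_mem_range.2 fun y => (hQ (x, y)).2⟩
  rw [integral_sub (hint κ) (hint κ'), sub_eq_zero] at h
  exact (integral_eq_iff_of_ae_le (hint κ) (hint κ') (ae_of_all _ hle)).1 h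

end Advantage

section DiscountedKernel

variable {X Y : Type*} [MeasurableSpace X] [MeasurableSpace Y] {γ C : ℝ}
  {K : ℕ → Kernel X Y} [∀ i, IsMarkovKernel (K i)] {f : Y → ℝ}

lemma measurable_tsum_pow_mul_integral_kernel (hγ : γ ∈ Ico 0 1) (hf_meas : Measurable f)
    (hf : ∀ y, f y ∈ Icc 0 C) : Measurable fun x => ∑' i, γ ^ i * ∫ y, f y ∂(K i x) := by
  refine measurable_of_tendsto_metrizable (fun n => ?_) (tendsto_pi_nhds.2 fun x =>
    (summable_pow_mul_of_mem_Icc hγ fun i =>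
      integral_mem_Icc_of_mem_Icc (K i x) hf).hasSum.tendsto_sum_nat)
  exact Finset.measurable_sum _ fun i _ =>
    (hf_meas.stronglyMeasurable.integral_kernel (κ := K i)).measurable.const_mul _

lemma integral_tsum_pow_mul_integral_kernel (hγ : γ ∈ Ico 0 1) (hf_meas : Measurable f)
    (hf : ∀ y, f y ∈ Icc 0 C) (ρ : Measure X) [IsProbabilityMeasure ρ] :
    ∫ x, ∑' i, γ ^ i * ∫ y, f y ∂(K i x) ∂ρ = ∑' i, γ ^ i * ∫ y, f y ∂(K i ∘ₘ ρ) := by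
  have hmeas (i : ℕ) : Measurable fun x => ∫ y, f y ∂(K i x) :=
    (hf_meas.stronglyMeasurable.integral_kernel (κ := K i)).measurable
  refine (hasSum_integral_of_dominated_convergence (fun i _ => γ ^ i * C)
    (fun i => ((hmeas i).const_mul _).aestronglyMeasurable)
    (fun i => ae_of_all _ fun x => ?_)
    (ae_of_all _ fun _ => (summable_geometric_of_lt_one hγ.1 hγ.2).mul_right C)
    (integrable_const _)
    (ae_of_all _ fun x => (summable_pow_mul_of_mem_Icc hγ fun i =>
      integral_mem_Icc_of_mem_Icc (K i x) hf).hasSum)).tsum_eq.symm.trans ?_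
  · obtain ⟨h0, h1⟩ := integral_mem_Icc_of_mem_Icc (K i x) hf
    rw [Real.norm_of_nonneg (mul_nonneg (pow_nonneg hγ.1 i) h0)]
    exact mul_le_mul_of_nonneg_left h1 (pow_nonneg hγ.1 i)
  · congr 1 with i
    rw [integral_const_mul, integral_comp_eq_integral_integral ρ (K i)
      (integrable_of_mem_Icc _ hf_meas hf)]

end DiscountedKernel

section Dynamics

variable {P : Kernel (S × A) S} {π π' : ℕ → Kernel S A}

def stepKernel (P : Kernel (S × A) S) (κ : Kernel S A) : Kernel (S × A) (S × A) :=
  (Kernel.id ×ₖ κ) ∘ₖ P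

def pathKernel (P : Kernel (S × A) S) (π : ℕ → Kernel S A) : ℕ → Kernel (S × A) (S × A)
  | 0 => Kernel.id
  | i + 1 => stepKernel P (π (i + 1)) ∘ₖ pathKernel P π i

instance [IsMarkovKernel P] (κ : Kernel S A) [IsMarkovKernel κ] :
    IsMarkovKernel (stepKernel P κ) := by
  unfold stepKernel; infer_instance

instance [IsMarkovKernel P] [∀ i, IsMarkovKernel (π i)] (i : ℕ) :
    IsMarkovKernel (pathKernel P π i) := by
  induction i with
  | zero => unfold pathKernel; infer_instance
  | succ i ih => unfold pathKernel; infer_instance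

lemma mdpInit_eq_compProd (κ : Kernel S A) [IsSFiniteKernel κ] (μ : Measure S) [SFinite μ] :
    mdpInit κ μ = μ ⊗ₘ κ := by
  rw [Measure.compProd_eq_comp_prod, mdpInit]
  congr with s : 1
  rw [Kernel.prod_apply, Kernel.id_apply, Measure.dirac_prod]

lemma mdpStep_eq_comp (κ : Kernel S A) [IsSFiniteKernel κ] (ρ : Measure (S × A)) :
    mdpStep P κ ρ = stepKernel P κ ∘ₘ ρ := by
  rw [mdpStep]
  congr with sa : 1
  rw [stepKernel, Kernel.comp_apply]
  congr with s : 1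
  rw [Kernel.prod_apply, Kernel.id_apply, Measure.dirac_prod]

lemma mdpStep_eq_compProd [IsSFiniteKernel P] (κ : Kernel S A) [IsSFiniteKernel κ]
    (ρ : Measure (S × A)) [SFinite ρ] : mdpStep P κ ρ = (P ∘ₘ ρ) ⊗ₘ κ := by
  rw [mdpStep_eq_comp, Measure.compProd_eq_comp_prod, Measure.comp_assoc, stepKernel]

lemma saLawFrom_eq_comp [∀ i, IsSFiniteKernel (π i)] (ρ : Measure (S × A)) (i : ℕ) :
    saLawFrom P π ρ i = pathKernel P π i ∘ₘ ρ := by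
  induction i with
  | zero => rw [saLawFrom, pathKernel, Measure.id_comp]
  | succ i ih => rw [saLawFrom, pathKernel, ih, mdpStep_eq_comp, Measure.comp_assoc]

lemma saLaw_add (μ0 : Measure S) (k j : ℕ) :
    saLaw P π μ0 (k + j) = saLawFrom P (fun i => π (k + i)) (saLaw P π μ0 k) j := by
  induction j with
  | zero => rfl
  | succ j ih => rw [← add_assoc, saLaw, ih]; rfl

lemma saLawFrom_congr (h : ∀ i, π (i + 1) = π' (i + 1)) (ρ : Measure (S × A)) (j : ℕ) :
    saLawFrom P π ρ j = saLawFrom P π' ρ j := by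
  induction j with
  | zero => rfl
  | succ j ih => rw [saLawFrom, saLawFrom, h, ih]

lemma saLaw_congr (μ0 : Measure S) {k : ℕ} (h : ∀ j ≤ k, π j = π' j) :
    saLaw P π μ0 k = saLaw P π' μ0 k := by
  induction k with
  | zero => rw [saLaw, saLaw, h 0 le_rfl]
  | succ k ih => rw [saLaw, saLaw, h (k + 1) le_rfl, ih fun j hj => h j (by omega)]

lemma fst_saLaw_absolutelyContinuous_stateOcc {γ : ℝ} (hγ : γ ∈ Ioo 0 1) (μ0 : Measure S)
    (k : ℕ) : (saLaw P π μ0 k).fst ≪ stateOcc P π μ0 γ := by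
  refine .trans ?_ (Measure.absolutelyContinuous_smul (by simpa using hγ.2))
  exact Measure.absolutelyContinuous_sum_right k
    (Measure.absolutelyContinuous_smul (by simpa using pow_pos hγ.1 k))

variable [IsMarkovKernel P] [∀ i, IsMarkovKernel (π i)] (μ0 : Measure S) [IsProbabilityMeasure μ0]

lemma isProbabilityMeasure_saLaw (i : ℕ) : IsProbabilityMeasure (saLaw P π μ0 i) := by
  induction i with
  | zero => rw [saLaw, mdpInit_eq_compProd]; infer_instance
  | succ i ih => rw [saLaw, mdpStep_eq_comp]; infer_instance

lemma saLaw_eq_compProd (k : ℕ) : saLaw P π μ0 k = (saLaw P π μ0 k).fst ⊗ₘ π k := by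
  have := isProbabilityMeasure_saLaw (P := P) (π := π) μ0
  cases k with
  | zero => rw [saLaw, mdpInit_eq_compProd, Measure.fst_compProd]
  | succ k => rw [saLaw, mdpStep_eq_compProd, Measure.fst_compProd]

lemma fst_saLaw_congr [∀ i, IsMarkovKernel (π' i)] {k : ℕ} (h : ∀ j < k, π j = π' j) :
    (saLaw P π μ0 k).fst = (saLaw P π' μ0 k).fst := by
  have := isProbabilityMeasure_saLaw (P := P) (π := π) μ0
  have := isProbabilityMeasure_saLaw (P := P) (π := π') μ0
  cases k with
  | zero => rw [saLaw, saLaw, mdpInit_eq_compProd, mdpInit_eq_compProd, Measure.fst_compProd,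
      Measure.fst_compProd]
  | succ k => rw [saLaw, saLaw, mdpStep_eq_compProd, mdpStep_eq_compProd, Measure.fst_compProd,
      Measure.fst_compProd, saLaw_congr μ0 fun j hj => h j (by omega)]

end Dynamics

section Values

variable {P : Kernel (S × A) S} {π π' : ℕ → Kernel S A} {γ Rmax : ℝ} {R : S × A → ℝ}

lemma Qval_eq_tsum_pathKernel [∀ i, IsSFiniteKernel (π i)] (sa : S × A) :
    Qval P π γ R sa = ∑' i, γ ^ i * ∫ x, R x ∂(pathKernel P π i sa) := by
  simp_rw [Qval, saLawFrom_eq_comp, Measure.dirac_bind (Kernel.measurable _)]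

lemma Qval_congr (h : ∀ i, π (i + 1) = π' (i + 1)) : Qval P π γ R = Qval P π' γ R := by
  ext sa
  simp_rw [Qval, saLawFrom_congr h]

variable [IsMarkovKernel P] [∀ i, IsMarkovKernel (π i)] (hγ : γ ∈ Ico 0 1)
  (hR_meas : Measurable R) (hR : ∀ sa, R sa ∈ Icc 0 Rmax)
include hγ hR

lemma Qval_mem_Icc (sa : S × A) : Qval P π γ R sa ∈ Icc 0 (Rmax * (1 - γ)⁻¹) := by
  rw [Qval_eq_tsum_pathKernel]
  exact tsum_pow_mul_mem_Icc hγ fun i => integral_mem_Icc_of_mem_Icc _ hR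

include hR_meas

lemma measurable_Qval : Measurable (Qval P π γ R) := by
  simp_rw [funext Qval_eq_tsum_pathKernel]
  exact measurable_tsum_pow_mul_integral_kernel hγ hR_meas hR

lemma integral_Qval (ρ : Measure (S × A)) [IsProbabilityMeasure ρ] :
    ∫ sa, Qval P π γ R sa ∂ρ = ∑' i, γ ^ i * ∫ x, R x ∂(saLawFrom P π ρ i) := by
  simp_rw [Qval_eq_tsum_pathKernel, saLawFrom_eq_comp]
  exact integral_tsum_pow_mul_integral_kernel hγ hR_meas hR ρ

variable (μ0 : Measure S) [IsProbabilityMeasure μ0]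

-- The tail policy ignores its step-0 kernel: the step-`k` action is already drawn in `saLaw`.
lemma retJ_eq_sum_range_add (k : ℕ) :
    retJ P π μ0 γ R = ∑ i ∈ Finset.range k, γ ^ i * ∫ sa, R sa ∂(saLaw P π μ0 i) +
      γ ^ k * ∫ sa, Qval P (fun i => π (k + i)) γ R sa ∂(saLaw P π μ0 k) := by
  have := isProbabilityMeasure_saLaw (P := P) (π := π) μ0
  rw [retJ, ← (summable_pow_mul_of_mem_Icc hγ fun i =>
    integral_mem_Icc_of_mem_Icc _ hR).sum_add_tsum_nat_add k, integral_Qval hγ hR_meas hR,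
    ← tsum_mul_left]
  congr with j
  rw [add_comm j k, saLaw_add, pow_add, mul_assoc]

end Values

section Deviation

variable {P : Kernel (S × A) S} [IsMarkovKernel P] {π π' : ℕ → Kernel S A}
  [∀ i, IsMarkovKernel (π i)] [∀ i, IsMarkovKernel (π' i)] {γ Rmax : ℝ} {R : S × A → ℝ}
  (hγ : γ ∈ Ico 0 1) (hR_meas : Measurable R) (hR : ∀ sa, R sa ∈ Icc 0 Rmax)
  (μ0 : Measure S) [IsProbabilityMeasure μ0]
include hγ hR_meas hR

lemma retJ_eq_of_ae_eq_advantage {k : ℕ} (hlt : ∀ j < k, π j = π' j)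
    (hgt : ∀ j, π (k + (j + 1)) = π' (k + (j + 1)))
    (hadv : (fun s => ∫ a, Qval P (fun i => π (k + i)) γ R (s, a) ∂(π k s))
      =ᵐ[(saLaw P π μ0 k).fst] fun s => ∫ a, Qval P (fun i => π (k + i)) γ R (s, a) ∂(π' k s)) :
    retJ P π μ0 γ R = retJ P π' μ0 γ R := by
  have := isProbabilityMeasure_saLaw (P := P) (π := π) μ0
  have hQ_int (ρ : Measure (S × A)) [IsFiniteMeasure ρ] :
      Integrable (Qval P (fun i => π (k + i)) γ R) ρ :=
    integrable_of_mem_Icc ρ (measurable_Qval hγ hR_meas hR) (Qval_mem_Icc hγ hR)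
  have hheads : ∀ i ∈ Finset.range k, saLaw P π μ0 i = saLaw P π' μ0 i := fun i hi =>
    saLaw_congr μ0 fun j hj => hlt j (lt_of_le_of_lt hj (Finset.mem_range.mp hi))
  rw [retJ_eq_sum_range_add hγ hR_meas hR μ0 k, retJ_eq_sum_range_add hγ hR_meas hR μ0 k,
    Finset.sum_congr rfl fun i hi => by rw [hheads i hi],
    Qval_congr (π := fun i => π' (k + i)) (π' := fun i => π (k + i)) fun j => (hgt j).symm,
    saLaw_eq_compProd μ0 k, saLaw_eq_compProd (π := π') μ0 k, ← fst_saLaw_congr μ0 hlt,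
    Measure.integral_compProd (hQ_int _), Measure.integral_compProd (hQ_int _),
    integral_congr_ae hadv]

end Deviation

section Switching

def switchPolicy (κ κ' : Kernel S A) (k : ℕ) : ℕ → Kernel S A :=
  fun i => if i < k then κ else κ'

variable {P : Kernel (S × A) S} [IsMarkovKernel P] {κ κ' : Kernel S A} [IsMarkovKernel κ]
  [IsMarkovKernel κ'] {γ Rmax : ℝ} {R : S × A → ℝ}

instance (k i : ℕ) : IsMarkovKernel (switchPolicy κ κ' k i) := by
  unfold switchPolicy; split <;> infer_instance

lemma retJ_switchPolicy_succ (hγ : γ ∈ Ico 0 1) (hR_meas : Measurable R)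
    (hR : ∀ sa, R sa ∈ Icc 0 Rmax) (μ0 : Measure S) [IsProbabilityMeasure μ0] {k : ℕ}
    (hadv : (fun s => ∫ a, Qval P (fun _ => κ') γ R (s, a) ∂(κ s))
      =ᵐ[(saLaw P (switchPolicy κ κ' k) μ0 k).fst]
        fun s => ∫ a, Qval P (fun _ => κ') γ R (s, a) ∂(κ' s)) :
    retJ P (switchPolicy κ κ' (k + 1)) μ0 γ R = retJ P (switchPolicy κ κ' k) μ0 γ R := by
  have hlt : ∀ j < k, switchPolicy κ κ' (k + 1) j = switchPolicy κ κ' k j := fun j hj => by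
    simp [switchPolicy, hj, hj.trans k.lt_succ_self]
  have htail :
      Qval P (fun i => switchPolicy κ κ' (k + 1) (k + i)) γ R = Qval P (fun _ => κ') γ R :=
    Qval_congr fun i => by simp [switchPolicy]
  refine retJ_eq_of_ae_eq_advantage hγ hR_meas hR μ0 hlt (fun j => by simp [switchPolicy]) ?_
  rw [htail, fst_saLaw_congr μ0 hlt]
  simpa [switchPolicy] using hadv

lemma tendsto_retJ_switchPolicy (hγ : γ ∈ Ico 0 1) (hR : ∀ sa, R sa ∈ Icc 0 Rmax)
    (μ0 : Measure S) [IsProbabilityMeasure μ0] :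
    Tendsto (fun k => retJ P (switchPolicy κ κ' k) μ0 γ R) atTop
      (nhds (retJ P (fun _ => κ) μ0 γ R)) := by
  have hbound (π : ℕ → Kernel S A) [∀ i, IsMarkovKernel (π i)] (i : ℕ) :
      ‖γ ^ i * ∫ sa, R sa ∂(saLaw P π μ0 i)‖ ≤ γ ^ i * Rmax := by
    have := isProbabilityMeasure_saLaw (P := P) (π := π) μ0
    obtain ⟨h0, h1⟩ := integral_mem_Icc_of_mem_Icc (saLaw P π μ0 i) hR
    rw [Real.norm_of_nonneg (mul_nonneg (pow_nonneg hγ.1 i) h0)]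
    exact mul_le_mul_of_nonneg_left h1 (pow_nonneg hγ.1 i)
  refine tendsto_tsum_of_dominated_convergence
    ((summable_geometric_of_lt_one hγ.1 hγ.2).mul_right Rmax) (fun i => ?_)
    (Eventually.of_forall fun k => hbound _)
  refine tendsto_const_nhds.congr' ?_
  filter_upwards [eventually_gt_atTop i] with k hik
  rw [saLaw_congr (π := switchPolicy κ κ' k) (π' := fun _ => κ) μ0
    fun j hj => if_pos (hj.trans_lt hik)]

end Switching

theorem advantage_to_optimality_general
    (P : Kernel (S × A) S) [IsMarkovKernel P]
    (πe πhat : Kernel S A) [IsMarkovKernel πe] [IsMarkovKernel πhat]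
    (μ0 : Measure S) [IsProbabilityMeasure μ0]
    (γ : ℝ) (hγ : γ ∈ Set.Ioo (0 : ℝ) 1)
    (Rmax : ℝ) (R : S × A → ℝ) (hRmeas : Measurable R)
    (hRrange : ∀ sa, R sa ∈ Set.Icc 0 Rmax)
    -- `V*(s) = sup_a Q*(s, a) = Q*(s, π*_e)`
    (hVsup : ∀ s : S, Vval P (fun _ => πe) γ R s = ⨆ a, Qval P (fun _ => πe) γ R (s, a))
    (hVpi : ∀ s : S, Vval P (fun _ => πe) γ R s = ∫ a, Qval P (fun _ => πe) γ R (s, a) ∂(πe s))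
    -- the covering distribution
    (μc : Measure S) [IsProbabilityMeasure μc]
    (hcover : ∀ π : ℕ → Kernel S A, (∀ i, IsMarkovKernel (π i)) →
      retJ P π μ0 γ R = retJ P (fun _ => πe) μ0 γ R →
      stateOcc P π μ0 γ ≪ μc)
    -- zero expected advantage under `μ_c`
    (hadv : ∫ s,
        ((∫ a, Qval P (fun _ => πe) γ R (s, a) ∂(πhat s)) -
          (∫ a, Qval P (fun _ => πe) γ R (s, a) ∂(πe s))) ∂μc = 0) :
    retJ P (fun _ => πhat) μ0 γ R = retJ P (fun _ => πe) μ0 γ R := by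
  have hγ' : γ ∈ Ico 0 1 := Ioo_subset_Ico_self hγ
  have hae := ae_eq_of_integral_advantage_eq_zero (measurable_Qval hγ' hRmeas hRrange)
    (Qval_mem_Icc hγ' hRrange) (fun s => (hVpi s).symm.trans (hVsup s)) μc hadv
  have hswitch_opt (k : ℕ) :
      retJ P (switchPolicy πhat πe k) μ0 γ R = retJ P (fun _ => πe) μ0 γ R := by
    induction k with
    | zero => rfl
    | succ k ih =>
      rw [← ih]
      refine retJ_switchPolicy_succ hγ' hRmeas hRrange μ0 ?_
      exact ((fst_saLaw_absolutelyContinuous_stateOcc hγ μ0 k).trans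
        (hcover _ (fun _ => inferInstance) ih)).ae_eq hae
  exact tendsto_nhds_unique (tendsto_retJ_switchPolicy hγ' hRrange μ0)
    (tendsto_const_nhds.congr fun k => (hswitch_opt k).symm)

/-- **From advantage to optimality**: if `μ_c` dominates the occupancy of every
non-stationary optimal policy and `⟨μ_c, Q*(·, π̂) - Q*(·, π*_e)⟩ = 0`, then `J_{π̂} = J*`. -/
theorem advantage_to_optimality
    (P : Kernel (S × A) S) [IsMarkovKernel P]
    (πe πhat : Kernel S A) [IsMarkovKernel πe] [IsMarkovKernel πhat]
    (μ0 : Measure S) [IsProbabilityMeasure μ0]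
    (γ : ℝ) (hγ : γ ∈ Set.Ioo (0 : ℝ) 1)
    (Rmax : ℝ) (R : S × A → ℝ) (hRmeas : Measurable R)
    (hRrange : ∀ sa, R sa ∈ Set.Icc 0 Rmax)
    -- `π*_e` is optimal almost everywhere (over all non-stationary policies)
    (hopt : ∀ s : S, Vval P (fun _ => πe) γ R s =
      ⨆ π : {π : ℕ → Kernel S A // ∀ i, IsMarkovKernel (π i)}, Vval P π.1 γ R s)
    -- Bellman optimality equation for `Q* = Q_{π*_e}`
    (hBellman : ∀ sa : S × A, Qval P (fun _ => πe) γ R sa =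
      R sa + γ * ∫ s', (⨆ a', Qval P (fun _ => πe) γ R (s', a')) ∂(P sa))
    -- `V*(s) = sup_a Q*(s, a) = Q*(s, π*_e)`
    (hVsup : ∀ s : S, Vval P (fun _ => πe) γ R s = ⨆ a, Qval P (fun _ => πe) γ R (s, a))
    (hVpi : ∀ s : S, Vval P (fun _ => πe) γ R s = ∫ a, Qval P (fun _ => πe) γ R (s, a) ∂(πe s))
    -- the covering distribution
    (μc : Measure S) [IsProbabilityMeasure μc]
    (hcover : ∀ π : ℕ → Kernel S A, (∀ i, IsMarkovKernel (π i)) →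
      retJ P π μ0 γ R = retJ P (fun _ => πe) μ0 γ R →
      stateOcc P π μ0 γ ≪ μc)
    -- zero expected advantage under `μ_c`
    (hadv : ∫ s,
        ((∫ a, Qval P (fun _ => πe) γ R (s, a) ∂(πhat s)) -
          (∫ a, Qval P (fun _ => πe) γ R (s, a) ∂(πe s))) ∂μc = 0) :
    retJ P (fun _ => πhat) μ0 γ R = retJ P (fun _ => πe) μ0 γ R :=
  advantage_to_optimality_general P πe πhat μ0 γ hγ Rmax R hRmeas hRrange hVsup hVpi μc hcover hadv
end
end

section
/- From L¹ distance to advantage: assume there is β* ∈ B with β*(s, a)·π_c(da|s) = π*_e(da|s) for every s (so π_{β*} = π*_e). Let q̂ : S × A → [0, V_max] be any bounded measurable function, let β̂ ∈ argmax_{β∈B} ⟨μ_c, q̂(·, π_β)⟩, and let π̂ = π_{β̂}. Then ⟨μ_c, Q*(·, π*_e) − Q*(·, π̂)⟩ ≤ 2·U_B·‖q̂ − Q*‖_{L¹(d_c)}. -/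
open MeasureTheory ProbabilityTheory Filter Set

noncomputable section

variable {S A : Type*} [MeasurableSpace S] [MeasurableSpace A]

/-- The reweighted policy `π_β(da|s) = β(s, a) · π_c(da|s)`. -/
def polRatio (πc : Kernel S A) [IsSFiniteKernel πc] (β : S × A → ℝ) : Kernel S A :=
  Kernel.withDensity πc fun s a => ENNReal.ofReal (β (s, a))

/-!
Write `d_c = μ_c ⊗ π_c`. Since `π_β = β · π_c`, every value `⟨μ_c, f(·, π_β)⟩` is the `d_c`-integral
of `β f`, so the advantage of `π*_e = π_{β*}` over `π̂` is `∫ (β* - β̂) Q* d d_c`. Splitting it as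
`∫ β* (Q* - q̂) + (∫ β* q̂ - ∫ β̂ q̂) + ∫ β̂ (q̂ - Q*)`, the middle term is `≤ 0` by the choice of `β̂`
and each outer term is at most `U_B ‖q̂ - Q*‖_{L¹(d_c)}` because `0 ≤ β ≤ U_B`. The only analytic
input is that `Q*`, a limit of partial sums of kernel integrals of `R`, is measurable, hence
`d_c`-integrable.
-/

section ValueMeasurable

variable (P : Kernel (S × A) S) (π : ℕ → Kernel S A)

def mdpStepKernel (κ : Kernel S A) : Kernel (S × A) (S × A) :=
  (Kernel.id ×ₖ κ) ∘ₖ P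

def saKernel : ℕ → Kernel (S × A) (S × A)
  | 0 => Kernel.id
  | i + 1 => mdpStepKernel P (π (i + 1)) ∘ₖ saKernel i

instance [IsMarkovKernel P] [∀ i, IsMarkovKernel (π i)] (i : ℕ) :
    IsMarkovKernel (saKernel P π i) := by
  induction i with
  | zero => rw [saKernel]; infer_instance
  | succ i ih => rw [saKernel, mdpStepKernel]; infer_instance

lemma saLawFrom_dirac [∀ i, IsSFiniteKernel (π i)] (sa : S × A) (i : ℕ) :
    saLawFrom P π (Measure.dirac sa) i = saKernel P π i sa := by
  induction i with
  | zero => rw [saLawFrom, saKernel, Kernel.id_apply]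
  | succ i ih =>
    rw [saLawFrom, ih, saKernel, Kernel.comp_apply, mdpStep, mdpStepKernel]
    congr 1
    funext x
    rw [Kernel.comp_apply]
    congr 1
    funext s'
    rw [Kernel.prod_apply, Kernel.id_apply, Measure.dirac_prod]

lemma measurable_Qval_s15 [IsMarkovKernel P] [∀ i, IsMarkovKernel (π i)] {γ : ℝ} (hγ0 : 0 ≤ γ)
    (hγ1 : γ < 1) {R : S × A → ℝ} (hR : Measurable R) {C : ℝ} (hRC : ∀ x, |R x| ≤ C) :
    Measurable (Qval P π γ R) := by
  set term : ℕ → S × A → ℝ := fun i sa => γ ^ i * ∫ x, R x ∂(saKernel P π i sa)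
  have hterm : ∀ i, Measurable (term i) := fun i =>
    measurable_const.mul (hR.stronglyMeasurable.integral_kernel (κ := saKernel P π i)).measurable
  have hsum : ∀ sa, Summable fun i => term i sa := fun sa =>
    ((summable_geometric_of_lt_one hγ0 hγ1).mul_right C).of_norm_bounded fun i => by
      rw [Real.norm_eq_abs, abs_mul, abs_of_nonneg (pow_nonneg hγ0 i)]
      gcongr
      calc |∫ x, R x ∂(saKernel P π i sa)| ≤ ∫ x, |R x| ∂(saKernel P π i sa) :=
            abs_integral_le_integral_abs
        _ ≤ ∫ _, C ∂(saKernel P π i sa) :=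
            integral_mono_of_nonneg (ae_of_all _ fun _ => abs_nonneg _) (integrable_const C)
              (ae_of_all _ hRC)
        _ = C := by simp
  have hQ : Qval P π γ R = fun sa => ∑' i, term i sa := by
    funext sa
    simp only [Qval, term, saLawFrom_dirac]
  rw [hQ]
  exact measurable_of_tendsto_metrizable (fun n => Finset.measurable_sum _ fun i _ => hterm i)
    (tendsto_pi_nhds.2 fun sa => (hsum sa).hasSum.tendsto_sum_nat)

end ValueMeasurable

section Reweighting

variable {X : Type*} [MeasurableSpace X] {ν : Measure X} {β f g : X → ℝ} {U : ℝ}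

lemma MeasureTheory.Integrable.mul_of_mem_Icc (hβ : Measurable β) (hβU : ∀ x, β x ∈ Set.Icc 0 U)
    (hf : Integrable f ν) : Integrable (fun x => β x * f x) ν :=
  hf.bdd_mul hβ.aestronglyMeasurable <| ae_of_all _ fun x => by
    rw [Real.norm_eq_abs, abs_of_nonneg (hβU x).1]
    exact (hβU x).2

lemma integral_mul_sub_integral_mul_le (hβ : Measurable β) (hβU : ∀ x, β x ∈ Set.Icc 0 U)
    (hf : Integrable f ν) (hg : Integrable g ν) :
    ∫ x, β x * f x ∂ν - ∫ x, β x * g x ∂ν ≤ U * ∫ x, |f x - g x| ∂ν := by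
  rw [← integral_sub (hf.mul_of_mem_Icc hβ hβU) (hg.mul_of_mem_Icc hβ hβU), ← integral_const_mul]
  refine integral_mono ((hf.mul_of_mem_Icc hβ hβU).sub (hg.mul_of_mem_Icc hβ hβU))
    ((hf.sub hg).abs.const_mul U) fun x => ?_
  calc β x * f x - β x * g x = β x * (f x - g x) := by ring
    _ ≤ β x * |f x - g x| := mul_le_mul_of_nonneg_left (le_abs_self _) (hβU x).1
    _ ≤ U * |f x - g x| := mul_le_mul_of_nonneg_right (hβU x).2 (abs_nonneg _)

theorem integral_mul_sub_integral_mul_le_of_le {β₁ β₂ Q q : X → ℝ} (hβ₁ : Measurable β₁)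
    (hβ₁U : ∀ x, β₁ x ∈ Set.Icc 0 U) (hβ₂ : Measurable β₂) (hβ₂U : ∀ x, β₂ x ∈ Set.Icc 0 U)
    (hQ : Integrable Q ν) (hq : Integrable q ν)
    (hmax : ∫ x, β₁ x * q x ∂ν ≤ ∫ x, β₂ x * q x ∂ν) :
    ∫ x, β₁ x * Q x ∂ν - ∫ x, β₂ x * Q x ∂ν ≤ 2 * U * ∫ x, |q x - Q x| ∂ν := by
  have h₁ := integral_mul_sub_integral_mul_le hβ₁ hβ₁U hQ hq
  have h₂ := integral_mul_sub_integral_mul_le hβ₂ hβ₂U hq hQ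
  simp only [abs_sub_comm (Q _)] at h₁
  linarith

end Reweighting

section PolRatio

variable {κ : Kernel S A} [IsSFiniteKernel κ] {β : S × A → ℝ} {U : ℝ}

lemma integral_polRatio_apply (hβ : Measurable β) (hβ0 : ∀ x, 0 ≤ β x) (f : A → ℝ) (s : S) :
    ∫ a, f a ∂(polRatio κ β s) = ∫ a, β (s, a) * f a ∂(κ s) := by
  have hdens : Measurable fun p : S × A => ENNReal.ofReal (β p) := ENNReal.measurable_ofReal.comp hβ
  rw [polRatio, Kernel.withDensity_apply _ hdens, integral_withDensity_eq_integral_toReal_smul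
    (by fun_prop) (ae_of_all _ fun _ => ENNReal.ofReal_lt_top)]
  simp only [smul_eq_mul, ENNReal.toReal_ofReal (hβ0 _)]

variable {μ : Measure S} [SFinite μ] {f : S × A → ℝ}

lemma integrable_integral_polRatio (hβ : Measurable β) (hβU : ∀ x, β x ∈ Set.Icc 0 U)
    (hf : Integrable f (μ ⊗ₘ κ)) : Integrable (fun s => ∫ a, f (s, a) ∂(polRatio κ β s)) μ := by
  simp only [integral_polRatio_apply hβ (fun x => (hβU x).1)]
  exact (hf.mul_of_mem_Icc hβ hβU).integral_compProd

lemma integral_integral_polRatio (hβ : Measurable β) (hβU : ∀ x, β x ∈ Set.Icc 0 U)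
    (hf : Integrable f (μ ⊗ₘ κ)) :
    ∫ s, ∫ a, f (s, a) ∂(polRatio κ β s) ∂μ = ∫ x, β x * f x ∂(μ ⊗ₘ κ) := by
  simp only [integral_polRatio_apply hβ (fun x => (hβU x).1)]
  exact (Measure.integral_compProd (hf.mul_of_mem_Icc hβ hβU)).symm

end PolRatio

theorem l1_to_advantage_general
    (P : Kernel (S × A) S) [IsMarkovKernel P]
    (πe : Kernel S A) [IsMarkovKernel πe]
    (γ : ℝ) (hγ : γ ∈ Set.Ioo (0 : ℝ) 1)
    (Rmax : ℝ) (R : S × A → ℝ) (hRmeas : Measurable R)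
    (hRrange : ∀ sa, R sa ∈ Set.Icc 0 Rmax)
    -- `Q* ∈ [0, V_max]`
    (Vmax : ℝ) (hQstar : ∀ sa, Qval P (fun _ => πe) γ R sa ∈ Set.Icc 0 Vmax)
    -- covering distribution `d_c = μ_c ⊗ π_c`
    (μc : Measure S) [IsProbabilityMeasure μc]
    (πc : Kernel S A) [IsMarkovKernel πc]
    -- the policy-ratio class `B`
    (UB : ℝ) (Bc : Finset ((S × A) → ℝ))
    (hBc : ∀ β ∈ Bc, Measurable β ∧ (∀ x, β x ∈ Set.Icc 0 UB) ∧
      ∀ s, ∫ a, β (s, a) ∂(πc s) = 1)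
    -- realizability of `B`: some `β* ∈ B` satisfies `β* · π_c = π*_e`
    (hβstar : ∃ βstar ∈ Bc, ∀ s : S, polRatio πc βstar s = πe s)
    -- an arbitrary bounded measurable `q̂`
    (qhat : S × A → ℝ) (hqhatMeas : Measurable qhat)
    (hqhatRange : ∀ sa, qhat sa ∈ Set.Icc 0 Vmax)
    -- `β̂ ∈ argmax_{β ∈ B} ⟨μ_c, q̂(·, π_β)⟩`
    (βhat : (S × A) → ℝ) (hβhatMem : βhat ∈ Bc)
    (hβhatMax : ∀ β ∈ Bc,
      ∫ s, (∫ a, qhat (s, a) ∂(polRatio πc β s)) ∂μc ≤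
        ∫ s, (∫ a, qhat (s, a) ∂(polRatio πc βhat s)) ∂μc) :
    ∫ s,
        ((∫ a, Qval P (fun _ => πe) γ R (s, a) ∂(πe s)) -
          (∫ a, Qval P (fun _ => πe) γ R (s, a) ∂(polRatio πc βhat s))) ∂μc ≤
      2 * UB * ∫ sa, |qhat sa - Qval P (fun _ => πe) γ R sa| ∂(μc.compProd πc) := by
  obtain ⟨βs, hβsMem, hβs⟩ := hβstar
  obtain ⟨hβsMeas, hβsRange, -⟩ := hBc βs hβsMem
  obtain ⟨hβhatMeas, hβhatRange, -⟩ := hBc βhat hβhatMem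
  set Q := Qval P (fun _ => πe) γ R
  have hQmeas : Measurable Q := measurable_Qval_s15 P _ hγ.1.le hγ.2 hRmeas (C := Rmax) fun x => by
    rw [abs_of_nonneg (hRrange x).1]; exact (hRrange x).2
  have hQ : Integrable Q (μc ⊗ₘ πc) := .of_mem_Icc 0 Vmax hQmeas.aemeasurable (ae_of_all _ hQstar)
  have hq : Integrable qhat (μc ⊗ₘ πc) :=
    .of_mem_Icc 0 Vmax hqhatMeas.aemeasurable (ae_of_all _ hqhatRange)
  simp only [← hβs]
  rw [integral_sub (integrable_integral_polRatio hβsMeas hβsRange hQ)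
      (integrable_integral_polRatio hβhatMeas hβhatRange hQ),
    integral_integral_polRatio hβsMeas hβsRange hQ,
    integral_integral_polRatio hβhatMeas hβhatRange hQ]
  refine integral_mul_sub_integral_mul_le_of_le hβsMeas hβsRange hβhatMeas hβhatRange hQ hq ?_
  simpa only [integral_integral_polRatio hβsMeas hβsRange hq,
    integral_integral_polRatio hβhatMeas hβhatRange hq] using hβhatMax βs hβsMem

/-- **From L¹ distance to advantage**:
`⟨μ_c, Q*(·, π*_e) - Q*(·, π̂)⟩ ≤ 2 U_B ‖q̂ - Q*‖_{L¹(d_c)}`. -/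
theorem l1_to_advantage
    (P : Kernel (S × A) S) [IsMarkovKernel P]
    (πe : Kernel S A) [IsMarkovKernel πe]
    (μ0 : Measure S) [IsProbabilityMeasure μ0]
    (γ : ℝ) (hγ : γ ∈ Set.Ioo (0 : ℝ) 1)
    (Rmax : ℝ) (R : S × A → ℝ) (hRmeas : Measurable R)
    (hRrange : ∀ sa, R sa ∈ Set.Icc 0 Rmax)
    -- `π*_e` is optimal almost everywhere (over all non-stationary policies)
    (hopt : ∀ s : S, Vval P (fun _ => πe) γ R s =
      ⨆ π : {π : ℕ → Kernel S A // ∀ i, IsMarkovKernel (π i)}, Vval P π.1 γ R s)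
    -- `Q* ∈ [0, V_max]`
    (Vmax : ℝ) (hQstar : ∀ sa, Qval P (fun _ => πe) γ R sa ∈ Set.Icc 0 Vmax)
    -- covering distribution `d_c = μ_c ⊗ π_c`
    (μc : Measure S) [IsProbabilityMeasure μc]
    (πc : Kernel S A) [IsMarkovKernel πc]
    -- the policy-ratio class `B`
    (UB : ℝ) (Bc : Finset ((S × A) → ℝ)) (hBne : Bc.Nonempty)
    (hBc : ∀ β ∈ Bc, Measurable β ∧ (∀ x, β x ∈ Set.Icc 0 UB) ∧
      ∀ s, ∫ a, β (s, a) ∂(πc s) = 1)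
    -- realizability of `B`: some `β* ∈ B` satisfies `β* · π_c = π*_e`
    (hβstar : ∃ βstar ∈ Bc, ∀ s : S, polRatio πc βstar s = πe s)
    -- an arbitrary bounded measurable `q̂`
    (qhat : S × A → ℝ) (hqhatMeas : Measurable qhat)
    (hqhatRange : ∀ sa, qhat sa ∈ Set.Icc 0 Vmax)
    -- `β̂ ∈ argmax_{β ∈ B} ⟨μ_c, q̂(·, π_β)⟩`
    (βhat : (S × A) → ℝ) (hβhatMem : βhat ∈ Bc)
    (hβhatMax : ∀ β ∈ Bc,
      ∫ s, (∫ a, qhat (s, a) ∂(polRatio πc β s)) ∂μc ≤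
        ∫ s, (∫ a, qhat (s, a) ∂(polRatio πc βhat s)) ∂μc) :
    ∫ s,
        ((∫ a, Qval P (fun _ => πe) γ R (s, a) ∂(πe s)) -
          (∫ a, Qval P (fun _ => πe) γ R (s, a) ∂(polRatio πc βhat s))) ∂μc ≤
      2 * UB * ∫ sa, |qhat sa - Qval P (fun _ => πe) γ R sa| ∂(μc.compProd πc) :=
  l1_to_advantage_general P πe γ hγ Rmax R hRmeas hRrange Vmax hQstar μc πc UB Bc hBc hβstar qhat
    hqhatMeas hqhatRange βhat hβhatMem hβhatMax
end
end
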